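/- arXiv:1907.03659 — 4 statements merged into one kernel-verified Lean document; each statement's English description precedes it below -/
import Mathlib

section
/- Let α, β ∈ ℝ with 0 < α ≤ β ≤ 2α. Then for all z ∈ (0,1), α(1 - z^{α+1} + z^{β+1-α} - z^{β+2}) + (β+1-α)(-z + z^{β+1-α} - z^{α+1} + z^{β+1}) > 0. -/
/-!
With `a = z ^ α` and `b = z ^ (β - α)` we have `a ≤ b ≤ 1`, and the expression is a polynomial in
`a, b, z`. It splits as half of the one-variable quantity
`2α - (2α + 2) z + (2α + 2) z ^ (2α + 1) - 2α z ^ (2α + 2)` (twice the expression when `β = 2α`, i.e. `a = b`)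
plus two terms that are nonnegative because `a ≤ b ≤ 1` and `α ≤ β ≤ 2α`.
The one-variable quantity vanishes at `z = 1` and is strictly decreasing on `(0, 1)`, its derivative
being negative by the weighted AM-GM (Bernoulli) inequality.
-/

open Real Set

lemma add_one_mul_rpow_lt_one_add_mul_rpow_add_one {x m : ℝ} (hx₀ : 0 < x) (hx₁ : x < 1)
    (hm : 0 < m) : (m + 1) * x ^ m < 1 + m * x ^ (m + 1) := by
  -- Bernoulli's inequality for the exponent `(m + 1) / m` at the point `x ^ m`
  have key := one_add_mul_self_lt_rpow_one_add (s := x ^ m - 1)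
    (by linarith [rpow_pos_of_pos hx₀ m]) (sub_neg.2 (rpow_lt_one hx₀.le hx₁ hm)).ne
    (p := (m + 1) / m) (by rw [one_lt_div hm]; linarith)
  rw [add_sub_cancel, ← rpow_mul hx₀.le, mul_div_cancel₀ _ hm.ne', ← sub_pos] at key
  have := mul_pos hm key
  field_simp at this
  linarith

lemma sub_mul_add_mul_rpow_sub_mul_rpow_pos {q x : ℝ} (hq : 0 < q) (hx₀ : 0 < x) (hx₁ : x < 1) :
    0 < q - (q + 2) * x + (q + 2) * x ^ (q + 1) - q * x ^ (q + 2) := by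
  set f : ℝ → ℝ := fun y ↦ q - (q + 2) * y + (q + 2) * y ^ (q + 1) - q * y ^ (q + 2)
  have hf : ∀ y, 0 < y →
      HasDerivAt f ((q + 2) * ((q + 1) * y ^ q - 1 - q * y ^ (q + 1))) y := by
    intro y hy
    have h₁ := hasDerivAt_rpow_const (p := q + 1) (Or.inl hy.ne')
    have h₂ := hasDerivAt_rpow_const (p := q + 2) (Or.inl hy.ne')
    rw [add_sub_cancel_right] at h₁
    rw [show q + 2 - 1 = q + 1 by ring] at h₂
    exact ((((hasDerivAt_id y).const_mul (q + 2)).const_sub q).add (h₁.const_mul (q + 2))).sub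
      (h₂.const_mul q) |>.congr_deriv (by ring)
  have hanti : StrictAntiOn f (Icc x 1) := by
    refine strictAntiOn_of_deriv_neg (convex_Icc x 1)
      (fun y hy ↦ (hf y (hx₀.trans_le hy.1)).continuousAt.continuousWithinAt) ?_
    rw [interior_Icc]
    rintro y ⟨hxy, hy₁⟩
    rw [(hf y (hx₀.trans hxy)).deriv]
    have := add_one_mul_rpow_lt_one_add_mul_rpow_add_one (hx₀.trans hxy) hy₁ hq
    exact mul_neg_of_pos_of_neg (by linarith) (by linarith)
  have hf₁ : f 1 = 0 := by simp only [f, one_rpow]; ring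
  simpa only [hf₁] using hanti (left_mem_Icc.2 hx₁.le) (right_mem_Icc.2 hx₁.le) hx₁

theorem stmt0 (α β : ℝ) (hα : 0 < α) (hαβ : α ≤ β) (hβ : β ≤ 2*α) :
    ∀ z ∈ Set.Ioo (0:ℝ) 1,
      0 < α * (1 - z^(α+1) + z^(β+1-α) - z^(β+2)) +
          (β+1-α) * (-z + z^(β+1-α) - z^(α+1) + z^(β+1)) := by
  rintro z ⟨hz₀, hz₁⟩
  have key := sub_mul_add_mul_rpow_sub_mul_rpow_pos (mul_pos two_pos hα) hz₀ hz₁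
  rw [show 2 * α + 1 = α + α + 1 by ring, show 2 * α + 2 = α + α + 1 + 1 by ring] at key
  rw [show β + 1 - α = β - α + 1 by ring, show β + 2 = α + (β - α) + 1 + 1 by ring,
    show β + 1 = α + (β - α) + 1 by ring]
  simp only [rpow_add hz₀, rpow_one] at key ⊢
  set a := z ^ α
  set b := z ^ (β - α)
  have ha : a < 1 := rpow_lt_one hz₀.le hz₁ hα
  have hab : a ≤ b := rpow_le_rpow_of_exponent_ge hz₀ hz₁.le (by linarith)
  have hb : b ≤ 1 := rpow_le_one hz₀.le hz₁.le (by linarith)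
  have h₁ : 0 ≤ α * (1 - a * z) * ((b - a) * z) := by
    have : a * z < 1 := mul_lt_one_of_nonneg_of_lt_one_left (by positivity) ha hz₁.le
    exact mul_nonneg (mul_nonneg hα.le (by linarith)) (mul_nonneg (by linarith) hz₀.le)
  have h₂ : 0 ≤ z * (1 + a) * ((2 * α - β) * (1 - a) + (β + 1 - α) * (b - a)) := by
    have : 0 < a := by positivity
    exact mul_nonneg (mul_nonneg hz₀.le (by linarith)) <|
      add_nonneg (mul_nonneg (by linarith) (by linarith)) (mul_nonneg (by linarith) (by linarith))
  linear_combination key / 2 + h₁ + h₂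
end

section
/- Let α ≥ 0, β > -1, α < β + 1 and γ = β + 1 - α. Define f(y) = ∫_y^1 t^γ/√(1 - t^{2γ}) dt for y ∈ (0,1). Then 2 ∫_0^1 y^α √(1 + f'(y)²) dy = 2 ∫_0^1 y^α / √(1 - y^{2γ}) dy = (1/γ) · B((α+1)/(2γ), 1/2), where B is the Beta function. -/
/-!
By the fundamental theorem of calculus `f' y = -y^γ / √(1 - y^(2γ))` on `(0, 1)`, so the first
integrand equals `y^α / √(1 - y^(2γ))` pointwise. The substitution `t = y^(2γ)` turns the integral
of `y^α / √(1 - y^(2γ))` into `(2γ)⁻¹ B((α + 1)/(2γ), 1/2)`; applied with `α = γ`, the same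
substitution shows that `f'` is integrable, which the fundamental theorem of calculus needs.
-/

/-- The real Beta function. -/
noncomputable def betaFn (a b : ℝ) : ℝ := ∫ t in (0:ℝ)..1, t^(a-1) * (1-t)^(b-1)

open MeasureTheory Set Real

-- The integrand is the norm of the complex Beta integrand at real parameters.
lemma integrableOn_betaIntegrand {a b : ℝ} (ha : 0 < a) (hb : 0 < b) :
    IntegrableOn (fun t : ℝ => t ^ (a - 1) * (1 - t) ^ (b - 1)) (Ioo 0 1) := by
  have h := (Complex.betaIntegral_convergent (u := a) (v := b) (by simpa) (by simpa)).norm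
  rw [intervalIntegrable_iff_integrableOn_Ioo_of_le zero_le_one] at h
  refine h.congr_fun (fun t ht => ?_) (measurableSet_Ioo (a := (0 : ℝ)) (b := 1))
  have h1t : (1 : ℂ) - t = ((1 - t : ℝ) : ℂ) := by push_cast; ring
  dsimp only
  rw [norm_mul, h1t, Complex.norm_cpow_eq_rpow_re_of_pos ht.1,
    Complex.norm_cpow_eq_rpow_re_of_pos (sub_pos.2 ht.2)]
  simp

lemma rpow_image_Ioo_zero_one {p : ℝ} (hp : 0 < p) : (· ^ p) '' Ioo (0 : ℝ) 1 = Ioo 0 1 := by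
  ext t
  constructor
  · rintro ⟨y, hy, rfl⟩
    exact ⟨rpow_pos_of_pos hy.1 p, rpow_lt_one hy.1.le hy.2 hp⟩
  · intro ht
    refine ⟨t ^ p⁻¹, ⟨rpow_pos_of_pos ht.1 _, rpow_lt_one ht.1.le ht.2 (inv_pos.2 hp)⟩, ?_⟩
    simp [← rpow_mul ht.1.le, hp.ne']

section

variable {E : Type*} [NormedAddCommGroup E] [NormedSpace ℝ E]

lemma integral_comp_rpow_Ioo_zero_one (g : ℝ → E) {p : ℝ} (hp : 0 < p) :
    ∫ x in Ioo 0 1, (p * x ^ (p - 1)) • g (x ^ p) = ∫ y in Ioo 0 1, g y := by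
  have := integral_image_eq_integral_abs_deriv_smul (measurableSet_Ioo (a := (0 : ℝ)) (b := 1))
    (fun x hx => (hasDerivAt_rpow_const (Or.inl hx.1.ne')).hasDerivWithinAt)
    ((rpow_left_injOn hp.ne').mono (fun x hx => le_of_lt hx.1)) g
  rw [rpow_image_Ioo_zero_one hp] at this
  rw [this]
  refine setIntegral_congr_fun measurableSet_Ioo (fun x hx => ?_)
  rw [abs_of_pos (by have := hx.1; positivity)]

lemma integrableOn_comp_rpow_Ioo_zero_one_iff (g : ℝ → E) {p : ℝ} (hp : 0 < p) :
    IntegrableOn (fun x => (p * x ^ (p - 1)) • g (x ^ p)) (Ioo 0 1) ↔ IntegrableOn g (Ioo 0 1) := by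
  have := integrableOn_image_iff_integrableOn_abs_deriv_smul
    (measurableSet_Ioo (a := (0 : ℝ)) (b := 1))
    (fun x hx => (hasDerivAt_rpow_const (Or.inl hx.1.ne')).hasDerivWithinAt)
    ((rpow_left_injOn hp.ne').mono (fun x hx => le_of_lt hx.1)) g
  rw [rpow_image_Ioo_zero_one hp] at this
  rw [this]
  refine integrableOn_congr_fun (fun x hx => ?_) (measurableSet_Ioo (a := (0 : ℝ)) (b := 1))
  rw [abs_of_pos (by have := hx.1; positivity)]

end

lemma betaFn_eq_integral_Ioo (a b : ℝ) :
    betaFn a b = ∫ t in Ioo 0 1, t ^ (a - 1) * (1 - t) ^ (b - 1) := by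
  rw [betaFn, intervalIntegral.integral_of_le zero_le_one, integral_Ioc_eq_integral_Ioo]

lemma sqrt_one_add_sq_div_sqrt_one_sub_sq {x : ℝ} (hx : x ^ 2 < 1) :
    √(1 + (x / √(1 - x ^ 2)) ^ 2) = (√(1 - x ^ 2))⁻¹ := by
  have hpos : 0 < 1 - x ^ 2 := sub_pos.2 hx
  rw [div_pow, sq_sqrt hpos.le, ← sqrt_inv]
  congr 1
  field_simp
  ring

lemma deriv_integral_left_of_continuousOn {g : ℝ → ℝ} {a b y : ℝ}
    (hg : IntegrableOn g (Ioo a b)) (hgc : ContinuousOn g (Ioo a b)) (hy : y ∈ Ioo a b) :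
    deriv (fun x => ∫ t in x..b, g t) y = -g y := by
  have hint : IntervalIntegrable g volume y b := by
    rw [intervalIntegrable_iff_integrableOn_Ioo_of_le hy.2.le]
    exact hg.mono_set (Ioo_subset_Ioo_left hy.1.le)
  exact (intervalIntegral.integral_hasDerivAt_left hint
    (hgc.stronglyMeasurableAtFilter isOpen_Ioo y hy)
    (hgc.continuousAt (isOpen_Ioo.mem_nhds hy))).deriv

section

variable {α γ : ℝ}

lemma continuousOn_rpow_div_sqrt_one_sub_rpow (hγ : 0 < γ) :
    ContinuousOn (fun y : ℝ => y ^ α / √(1 - y ^ (2 * γ))) (Ioo 0 1) := by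
  have hpow (r : ℝ) : ContinuousOn (fun y : ℝ => y ^ r) (Ioo 0 1) :=
    fun y hy => (continuousAt_rpow_const _ _ (Or.inl hy.1.ne')).continuousWithinAt
  refine (hpow α).div (continuousOn_const.sub (hpow _)).sqrt fun y hy => ?_
  have := rpow_lt_one hy.1.le hy.2 (by positivity : 0 < 2 * γ)
  exact (sqrt_pos.2 (by linarith)).ne'

lemma betaIntegrand_comp_rpow (hγ : 0 < γ) {y : ℝ} (hy : y ∈ Ioo (0 : ℝ) 1) :
    (2 * γ * y ^ (2 * γ - 1)) • ((y ^ (2 * γ)) ^ ((α + 1) / (2 * γ) - 1)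
        * (1 - y ^ (2 * γ)) ^ ((1 : ℝ) / 2 - 1))
      = 2 * γ * (y ^ α / √(1 - y ^ (2 * γ))) := by
  have hu : 0 < 1 - y ^ (2 * γ) := sub_pos.2 (rpow_lt_one hy.1.le hy.2 (by positivity))
  have hpow : y ^ (2 * γ - 1) * (y ^ (2 * γ)) ^ ((α + 1) / (2 * γ) - 1) = y ^ α := by
    rw [← rpow_mul hy.1.le, ← rpow_add hy.1]
    congr 1
    field_simp
    ring
  rw [smul_eq_mul, show (1 : ℝ) / 2 - 1 = -(1 / 2) by norm_num, rpow_neg hu.le, ← sqrt_eq_rpow,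
    ← hpow]
  ring

lemma integrableOn_rpow_div_sqrt_one_sub_rpow (hα : -1 < α) (hγ : 0 < γ) :
    IntegrableOn (fun y : ℝ => y ^ α / √(1 - y ^ (2 * γ))) (Ioo 0 1) := by
  have hbeta := integrableOn_betaIntegrand (a := (α + 1) / (2 * γ)) (b := 1 / 2)
    (div_pos (by linarith) (by positivity)) one_half_pos
  rw [← integrableOn_comp_rpow_Ioo_zero_one_iff _ (by positivity : 0 < 2 * γ)] at hbeta
  have h := hbeta.congr_fun (fun y hy => betaIntegrand_comp_rpow hγ hy) measurableSet_Ioo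
  exact IntegrableOn.congr_fun (h.const_mul (2 * γ)⁻¹)
    (fun y _ => inv_mul_cancel_left₀ (by positivity) _) measurableSet_Ioo

lemma integral_rpow_div_sqrt_one_sub_rpow (hγ : 0 < γ) :
    ∫ y in Ioo 0 1, y ^ α / √(1 - y ^ (2 * γ))
      = (2 * γ)⁻¹ * betaFn ((α + 1) / (2 * γ)) (1 / 2) := by
  rw [betaFn_eq_integral_Ioo, ← integral_comp_rpow_Ioo_zero_one
      (fun t : ℝ => t ^ ((α + 1) / (2 * γ) - 1) * (1 - t) ^ ((1 : ℝ) / 2 - 1))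
      (by positivity : 0 < 2 * γ),
    setIntegral_congr_fun measurableSet_Ioo (fun y hy => betaIntegrand_comp_rpow hγ hy),
    integral_const_mul, inv_mul_cancel_left₀ (by positivity)]

end

theorem stmt6_general (α β γ : ℝ) (hαβ : α < β + 1)
    (hγ : γ = β + 1 - α)
    (f : ℝ → ℝ) (hf : ∀ y, f y = ∫ t in y..(1:ℝ), t^γ / Real.sqrt (1 - t^(2*γ))) :
    2 * (∫ y in (0:ℝ)..1, y^α * Real.sqrt (1 + (deriv f y)^2))
      = 2 * (∫ y in (0:ℝ)..1, y^α / Real.sqrt (1 - y^(2*γ))) ∧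
    2 * (∫ y in (0:ℝ)..1, y^α / Real.sqrt (1 - y^(2*γ)))
      = (1/γ) * betaFn ((α+1)/(2*γ)) (1/2) := by
  have hγ0 : 0 < γ := by linarith
  simp only [intervalIntegral.integral_of_le zero_le_one, integral_Ioc_eq_integral_Ioo]
  refine ⟨?_, ?_⟩
  · have hderiv (y : ℝ) (hy : y ∈ Ioo (0 : ℝ) 1) :
        deriv f y = -(y ^ γ / √(1 - y ^ (2 * γ))) := by
      rw [funext hf]
      exact deriv_integral_left_of_continuousOn
        (integrableOn_rpow_div_sqrt_one_sub_rpow (by linarith) hγ0)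
        (continuousOn_rpow_div_sqrt_one_sub_rpow hγ0) hy
    refine congrArg _ (setIntegral_congr_fun measurableSet_Ioo fun y hy => ?_)
    have hsq : (y ^ γ) ^ 2 = y ^ (2 * γ) := by
      rw [← rpow_natCast, ← rpow_mul hy.1.le, mul_comm]; norm_num
    rw [hderiv y hy, neg_sq, ← hsq, sqrt_one_add_sq_div_sqrt_one_sub_sq, div_eq_mul_inv]
    exact hsq ▸ rpow_lt_one hy.1.le hy.2 (by positivity)
  · rw [integral_rpow_div_sqrt_one_sub_rpow hγ0]
    field_simp

theorem stmt6 (α β γ : ℝ) (hα : 0 ≤ α) (hβ : -1 < β) (hαβ : α < β + 1)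
    (hγ : γ = β + 1 - α)
    (f : ℝ → ℝ) (hf : ∀ y, f y = ∫ t in y..(1:ℝ), t^γ / Real.sqrt (1 - t^(2*γ))) :
    2 * (∫ y in (0:ℝ)..1, y^α * Real.sqrt (1 + (deriv f y)^2))
      = 2 * (∫ y in (0:ℝ)..1, y^α / Real.sqrt (1 - y^(2*γ))) ∧
    2 * (∫ y in (0:ℝ)..1, y^α / Real.sqrt (1 - y^(2*γ)))
      = (1/γ) * betaFn ((α+1)/(2*γ)) (1/2) :=
  stmt6_general α β γ hαβ hγ f hf
end

section
/- Let α > 0, β ∈ ℝ with α ≤ β, λ > 0, y₀ > 0, and let y : [s₀, L) → (0, y₀] be C¹ with y'(s) < 0 on (s₀, L). Define κ(s) = λ((β+1-α) y(s)^{β-α} + α y(s)^{-1-α} y₀^{β+1}). Then κ'(s) = -λ y(s)^{-2-α} y'(s) (α(α+1) y₀^{β+1} - (β+1-α)(β-α) y(s)^{β+1}), and if moreover β < 2α and y(s) ≤ y₀ on [s₀, L), then κ'(s) > 0 on (s₀, L). -/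
theorem stmt14 (α β lam y₀ s₀ L : ℝ) (hα : 0 < α) (hαβ : α ≤ β) (hlam : 0 < lam)
    (hy₀ : 0 < y₀) (hs : s₀ < L)
    (y y' : ℝ → ℝ)
    (hy : ∀ s ∈ Set.Ico s₀ L, HasDerivAt y (y' s) s)
    (hypos : ∀ s ∈ Set.Ico s₀ L, 0 < y s ∧ y s ≤ y₀)
    (hy' : ∀ s ∈ Set.Ioo s₀ L, y' s < 0)
    (κ : ℝ → ℝ)
    (hκ : ∀ s, κ s = lam * ((β+1-α) * (y s)^(β-α) + α * (y s)^(-1-α) * y₀^(β+1))) :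
    ∀ s ∈ Set.Ioo s₀ L,
      HasDerivAt κ (-lam * (y s)^(-2-α) * y' s *
        (α*(α+1)*y₀^(β+1) - (β+1-α)*(β-α)*(y s)^(β+1))) s ∧
      (β < 2*α → 0 < -lam * (y s)^(-2-α) * y' s *
        (α*(α+1)*y₀^(β+1) - (β+1-α)*(β-α)*(y s)^(β+1))) := by
  intro s hs'
  obtain ⟨hy1, hy2⟩ := hypos s ⟨le_of_lt hs'.1, hs'.2⟩
  have hyd := hy s ⟨le_of_lt hs'.1, hs'.2⟩
  have hne : y s ≠ 0 := ne_of_gt hy1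
  have h1 : HasDerivAt (fun t => (y t) ^ (β - α)) (y' s * (β - α) * (y s) ^ (β - α - 1)) s :=
    hyd.rpow_const (Or.inl hne)
  have h2 : HasDerivAt (fun t => (y t) ^ (-1 - α)) (y' s * (-1 - α) * (y s) ^ (-1 - α - 1)) s :=
    hyd.rpow_const (Or.inl hne)
  have hκfun : κ = fun t => lam * ((β+1-α) * (y t)^(β-α) + α * (y t)^(-1-α) * y₀^(β+1)) :=
    funext hκ
  have hx : (y s) ^ (β - α - 1) = (y s) ^ (-2 - α) * (y s) ^ (β + 1) := by
    rw [← Real.rpow_add hy1]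
    congr 1
    ring
  have hx2 : (y s) ^ (-1 - α - 1) = (y s) ^ (-2 - α) := by
    congr 1
    ring
  have hd : HasDerivAt κ
      (lam * ((β+1-α) * (y' s * (β - α) * (y s) ^ (β - α - 1)) +
        α * (y' s * (-1 - α) * (y s) ^ (-1 - α - 1)) * y₀^(β+1))) s := by
    rw [hκfun]
    exact ((h1.const_mul (β+1-α)).add ((h2.const_mul α).mul_const (y₀^(β+1)))).const_mul lam
  constructor
  · convert hd using 1
    rw [hx, hx2]
    ring
  · intro hβ
    have hA : 0 < (y s) ^ (-2 - α) := Real.rpow_pos_of_pos hy1 _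
    have hneg := hy' s hs'
    have hy₀p : 0 < y₀ ^ (β + 1) := Real.rpow_pos_of_pos hy₀ _
    have hle : (y s) ^ (β + 1) ≤ y₀ ^ (β + 1) :=
      Real.rpow_le_rpow (le_of_lt hy1) hy2 (by linarith)
    have hcn : 0 ≤ (β + 1 - α) * (β - α) := by nlinarith
    have hb : (β+1-α)*(β-α)*(y s)^(β+1) ≤ (β+1-α)*(β-α)*y₀^(β+1) :=
      mul_le_mul_of_nonneg_left hle hcn
    have hgt : 0 < (2*α-β)*(β+1)*y₀^(β+1) :=
      mul_pos (mul_pos (by linarith) (by linarith)) hy₀p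
    have hid : α*(α+1)*y₀^(β+1) - (β+1-α)*(β-α)*y₀^(β+1) = (2*α-β)*(β+1)*y₀^(β+1) := by
      ring
    have key : 0 < α*(α+1)*y₀^(β+1) - (β+1-α)*(β-α)*(y s)^(β+1) := by linarith
    have h3 : 0 < -lam * (y s)^(-2-α) * y' s := by
      have := mul_pos (mul_pos hlam hA) (neg_pos.mpr hneg)
      nlinarith [this]
    exact mul_pos h3 key
end

section
/- Let α ≥ 0 and β > -1 with α < β+1 and β ≤ 2α, let γ = β+1-α, and let Ω* = {(x,y): |x| < f(y), 0 < y < 1} with f(y) = ∫_y^1 t^γ/√(1-t^{2γ}) dt. Then the isoperimetric ratio R = P_α(Ω*) / (A_β(Ω*))^{(α+1)/(β+2)} equals γ^{(α+1)/(β+2) - 1} · ((β+1)(β+2)/(α+1))^{(α+1)/(β+2)} · B((α+1)/(2γ), 1/2)^{γ/(β+2)}, where P_α(Ω*) = (1/γ) B((α+1)/(2γ), 1/2) and A_β(Ω*) = (1/(γ(β+1))) B(1 + (α+1)/(2γ), 1/2). -/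
open Real

lemma ofReal_betaFn (a b : ℝ) : (betaFn a b : ℂ) = Complex.betaIntegral a b := by
  rw [betaFn, Complex.betaIntegral, ← intervalIntegral.integral_ofReal]
  refine intervalIntegral.integral_congr fun t ht => ?_
  rw [Set.uIcc_of_le zero_le_one] at ht
  push_cast
  rw [Complex.ofReal_cpow ht.1, Complex.ofReal_cpow (sub_nonneg.2 ht.2)]
  push_cast
  ring

lemma betaFn_eq_beta {a b : ℝ} (ha : 0 < a) (hb : 0 < b) :
    betaFn a b = ProbabilityTheory.beta a b := by
  rw [ProbabilityTheory.beta_eq_betaIntegralReal a b ha hb, ← ofReal_betaFn, Complex.ofReal_re]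

lemma betaFn_pos {a b : ℝ} (ha : 0 < a) (hb : 0 < b) : 0 < betaFn a b :=
  betaFn_eq_beta ha hb ▸ ProbabilityTheory.beta_pos ha hb

lemma betaFn_one_add {a b : ℝ} (ha : 0 < a) (hb : 0 < b) :
    betaFn (1 + a) b = betaFn a b * (a / (a + b)) := by
  have hab : 0 < a + b := add_pos ha hb
  rw [betaFn_eq_beta (by linarith) hb, betaFn_eq_beta ha hb, ProbabilityTheory.beta,
    ProbabilityTheory.beta, add_comm 1 a, add_right_comm, Gamma_add_one ha.ne',
    Gamma_add_one hab.ne']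
  have := (Gamma_pos_of_pos hab).ne'
  field_simp

lemma div_div_mul_rpow_eq {B c γ : ℝ} (hB : 0 < B) (hc : 0 < c) (hγ : 0 < γ) (e : ℝ) :
    B / γ / (B * c) ^ e = γ ^ (e - 1) * (c * γ)⁻¹ ^ e * B ^ (1 - e) := by
  rw [mul_rpow hB.le hc.le, inv_rpow (mul_pos hc hγ).le, mul_rpow hc.le hγ.le,
    rpow_sub hγ, rpow_sub hB, rpow_one, rpow_one]
  have := rpow_pos_of_pos hB e
  have := rpow_pos_of_pos hc e
  have := rpow_pos_of_pos hγ e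
  field_simp

theorem stmt19_general (α β γ P A : ℝ) (hα : 0 ≤ α) (hβ : -1 < β) (h1 : α < β+1)
    (hγ : γ = β+1-α)
    (hP : P = (1/γ) * betaFn ((α+1)/(2*γ)) (1/2))
    (hA : A = 1/(γ*(β+1)) * betaFn (1 + (α+1)/(2*γ)) (1/2)) :
    P / A^((α+1)/(β+2))
      = γ^((α+1)/(β+2) - 1) * ((β+1)*(β+2)/(α+1))^((α+1)/(β+2)) *
        (betaFn ((α+1)/(2*γ)) (1/2))^(γ/(β+2)) := by
  have hγ0 : 0 < γ := by linarith
  have hβ1 : 0 < β + 1 := by linarith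
  have hβ2 : 0 < β + 2 := by linarith
  set a := (α+1)/(2*γ)
  have ha : 0 < a := by positivity
  set B := betaFn a (1/2)
  set c := (α+1)/(γ*(β+1)*(β+2))
  have hc : 0 < c := by positivity
  have ha_div : a / (a + 1/2) = (α+1)/(β+2) := by
    simp only [a]
    field_simp
    rw [hγ]
    ring
  have hA' : A = B * c := by
    rw [hA, betaFn_one_add ha one_half_pos, ha_div]
    simp only [B, c]
    field_simp
  have hcγ : (β+1)*(β+2)/(α+1) = (c*γ)⁻¹ := by
    simp only [c]
    field_simp
  have hexp : γ/(β+2) = 1 - (α+1)/(β+2) := by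
    field_simp
    rw [hγ]
    ring
  rw [hP, hA', hcγ, hexp, ← div_div_mul_rpow_eq (betaFn_pos ha one_half_pos) hc hγ0, one_div_mul_eq_div]

theorem stmt19 (α β γ P A : ℝ) (hα : 0 ≤ α) (hβ : -1 < β) (h1 : α < β+1)
    (h2 : β ≤ 2*α) (hγ : γ = β+1-α)
    (hP : P = (1/γ) * betaFn ((α+1)/(2*γ)) (1/2))
    (hA : A = 1/(γ*(β+1)) * betaFn (1 + (α+1)/(2*γ)) (1/2)) :
    P / A^((α+1)/(β+2))
      = γ^((α+1)/(β+2) - 1) * ((β+1)*(β+2)/(α+1))^((α+1)/(β+2)) *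
        (betaFn ((α+1)/(2*γ)) (1/2))^(γ/(β+2)) :=
  stmt19_general α β γ P A hα hβ h1 hγ hP hA
end
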